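/- Let 0 < r ≤ 1/2. Define E^d(r) = diag(1,1,−r²) ∈ S³, the 3×3 rotation-type matrix R(θ) with rows (cos θ, sin θ, 0), (−sin θ, cos θ, 0), (0,0,1), and the translation matrix P with rows (1,0,−1), (0,1,0), (0,0,1). Set B^k = R(kπ/3)ᵀ Pᵀ E^d(r) P R(kπ/3) for 0 ≤ k ≤ 5, B^6 = E^d(r), and B^7 = −diag(1,1,−9/4). With weights α_k = 1 for 0 ≤ k ≤ 6 and α_7 = 1/3, the matrix α_j B^j + α_k B^k is positive semidefinite for all 0 ≤ j < k ≤ 7; in particular the family {B^0, …, B^7} satisfies Condition (D). -/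

import Mathlib

/-!
Every `B^k` with `k ≤ 6` is the matrix of a disk of radius `r` (see `diskMat`), with centres
`(cos (kπ/3), sin (kπ/3))` and `(0, 0)`, while `B^7` is minus the matrix of the disk of radius
`3/2` about the origin. The sum of two such matrices has the arrow shape
`[[a, 0, b], [0, a, c], [b, c, d]]`, which is positive semidefinite as soon as `a > 0` and
`b² + c² ≤ a d`. For two disks this reduces to `2 (r² + s²) ≤ |p - q|²`, true since the centres
are at distance at least `1` and `4 r² ≤ 1`; for `B^7` it reduces to
`|p|² / 3 + 2 r² / 3 ≤ 1 / 2`.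
-/

open Matrix

/-- The disk-constraint matrix `E^d(r) = diag(1, 1, -r²)`. -/
noncomputable def EdMat (r : ℝ) : Matrix (Fin 3) (Fin 3) ℝ :=
  !![1, 0, 0; 0, 1, 0; 0, 0, -r ^ 2]

/-- The rotation-type matrix `R(θ)`. -/
noncomputable def RMat (θ : ℝ) : Matrix (Fin 3) (Fin 3) ℝ :=
  !![Real.cos θ, Real.sin θ, 0; -Real.sin θ, Real.cos θ, 0; 0, 0, 1]

/-- The translation matrix `P = P((1,0))`. -/
noncomputable def PMat : Matrix (Fin 3) (Fin 3) ℝ :=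
  !![1, 0, -1; 0, 1, 0; 0, 0, 1]

/-- The family `B^0, …, B^7` of Instance 2.1. -/
noncomputable def diskFam (r : ℝ) (k : Fin 8) : Matrix (Fin 3) (Fin 3) ℝ :=
  if (k : ℕ) ≤ 5 then
    (RMat ((k : ℕ) * Real.pi / 3))ᵀ * PMatᵀ * EdMat r * PMat * RMat ((k : ℕ) * Real.pi / 3)
  else if (k : ℕ) = 6 then EdMat r
  else -(!![1, 0, 0; 0, 1, 0; 0, 0, -(9 / 4)] : Matrix (Fin 3) (Fin 3) ℝ)

/-- The weights `α_k = 1` for `k ≤ 6` and `α_7 = 1/3`. -/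
noncomputable def diskWeight (k : Fin 8) : ℝ := if (k : ℕ) = 7 then 1 / 3 else 1

open Real

lemma posSemidef_arrow {a b c d : ℝ} (ha : 0 < a) (h : b ^ 2 + c ^ 2 ≤ a * d) :
    (!![a, 0, b; 0, a, c; b, c, d]).PosSemidef := by
  refine PosSemidef.of_dotProduct_mulVec_nonneg ?_ fun x => ?_
  · ext i j
    fin_cases i <;> fin_cases j <;> rfl
  · simp only [star_trivial, dotProduct, mulVec, Fin.sum_univ_three, cons_val_zero, cons_val_one,
      cons_val_two, of_apply, tail_cons, head_cons]
    have complete_square :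
        a * (x 0 * (a * x 0 + 0 * x 1 + b * x 2) + x 1 * (0 * x 0 + a * x 1 + c * x 2)
          + x 2 * (b * x 0 + c * x 1 + d * x 2))
        = (a * x 0 + b * x 2) ^ 2 + (a * x 1 + c * x 2) ^ 2
          + (a * d - b ^ 2 - c ^ 2) * x 2 ^ 2 := by
      ring
    refine nonneg_of_mul_nonneg_right ?_ ha
    rw [complete_square]
    have : 0 ≤ a * d - b ^ 2 - c ^ 2 := by linarith
    positivity

/-- The quadratic form `(x - p.1 z)² + (y - p.2 z)² - r² z²`: nonnegative at `(x, y, 1)` iff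
`(x, y)` lies outside the open disk of radius `r` about `p`. -/
noncomputable def diskMat (p : ℝ × ℝ) (r : ℝ) : Matrix (Fin 3) (Fin 3) ℝ :=
  !![1, 0, -p.1; 0, 1, -p.2; -p.1, -p.2, p.1 ^ 2 + p.2 ^ 2 - r ^ 2]

lemma diskMat_add_diskMat_posSemidef {p q : ℝ × ℝ} {r s : ℝ}
    (h : 2 * (r ^ 2 + s ^ 2) ≤ (p.1 - q.1) ^ 2 + (p.2 - q.2) ^ 2) :
    (diskMat p r + diskMat q s).PosSemidef := by
  have hsum : diskMat p r + diskMat q s = !![2, 0, -(p.1 + q.1); 0, 2, -(p.2 + q.2);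
      -(p.1 + q.1), -(p.2 + q.2), p.1 ^ 2 + p.2 ^ 2 - r ^ 2 + (q.1 ^ 2 + q.2 ^ 2 - s ^ 2)] := by
    ext i j
    fin_cases i <;> fin_cases j <;> simp [diskMat] <;> ring
  rw [hsum]
  exact posSemidef_arrow two_pos (by nlinarith)

lemma diskMat_add_smul_neg_diskMat_posSemidef {p : ℝ × ℝ} {r R t : ℝ} (ht : t < 1)
    (h : t * (p.1 ^ 2 + p.2 ^ 2) + (1 - t) * r ^ 2 ≤ (1 - t) * t * R ^ 2) :
    (diskMat p r + t • -diskMat (0, 0) R).PosSemidef := by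
  have hsum : diskMat p r + t • -diskMat (0, 0) R = !![1 - t, 0, -p.1; 0, 1 - t, -p.2;
      -p.1, -p.2, p.1 ^ 2 + p.2 ^ 2 - r ^ 2 + t * R ^ 2] := by
    ext i j
    fin_cases i <;> fin_cases j <;> simp [diskMat] <;> ring
  rw [hsum]
  exact posSemidef_arrow (sub_pos.2 ht) (by nlinarith)

lemma EdMat_eq_diskMat (r : ℝ) : EdMat r = diskMat (0, 0) r := by
  ext i j
  fin_cases i <;> fin_cases j <;> simp [EdMat, diskMat]

lemma conj_EdMat_eq_diskMat (θ r : ℝ) :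
    (RMat θ)ᵀ * PMatᵀ * EdMat r * PMat * RMat θ = diskMat (cos θ, sin θ) r := by
  ext i j
  fin_cases i <;> fin_cases j <;>
    simp [RMat, PMat, EdMat, diskMat, mul_apply, Fin.sum_univ_three] <;>
    first | ring1 | linear_combination sin_sq_add_cos_sq θ

noncomputable def diskCenter (k : Fin 8) : ℝ × ℝ :=
  if (k : ℕ) ≤ 5 then (cos ((k : ℕ) * π / 3), sin ((k : ℕ) * π / 3)) else (0, 0)

lemma diskFam_of_ne_seven (r : ℝ) {k : Fin 8} (hk : (k : ℕ) ≠ 7) :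
    diskFam r k = diskMat (diskCenter k) r := by
  by_cases hk5 : (k : ℕ) ≤ 5
  · rw [diskFam, diskCenter, if_pos hk5, if_pos hk5, conj_EdMat_eq_diskMat]
  · rw [diskFam, diskCenter, if_neg hk5, if_neg hk5, if_pos (by omega), EdMat_eq_diskMat]

lemma diskFam_seven (r : ℝ) {k : Fin 8} (hk : (k : ℕ) = 7) :
    diskFam r k = -diskMat (0, 0) (3 / 2) := by
  rw [diskFam, if_neg (by omega), if_neg (by omega)]
  ext i j
  fin_cases i <;> fin_cases j <;> norm_num [diskMat]

lemma diskWeight_of_ne_seven {k : Fin 8} (hk : (k : ℕ) ≠ 7) : diskWeight k = 1 := if_neg hk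

lemma diskWeight_seven {k : Fin 8} (hk : (k : ℕ) = 7) : diskWeight k = 1 / 3 := if_pos hk

lemma cos_le_half_of_mem_Icc {x : ℝ} (h₁ : π / 3 ≤ x) (h₂ : x ≤ 5 * π / 3) :
    cos x ≤ 1 / 2 := by
  rw [← cos_pi_div_three]
  rcases le_total x π with hx | hx
  · exact cos_le_cos_of_nonneg_of_le_pi (by positivity) hx h₁
  · rw [← cos_two_pi_sub]
    exact cos_le_cos_of_nonneg_of_le_pi (by positivity) (by linarith) (by linarith)

lemma sq_dist_cos_sin (a b : ℝ) :
    (cos a - cos b) ^ 2 + (sin a - sin b) ^ 2 = 2 - 2 * cos (a - b) := by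
  rw [cos_sub]
  linear_combination sin_sq_add_cos_sq a + sin_sq_add_cos_sq b

lemma diskCenter_sq_le_one (k : Fin 8) : (diskCenter k).1 ^ 2 + (diskCenter k).2 ^ 2 ≤ 1 := by
  unfold diskCenter
  split_ifs
  · rw [cos_sq_add_sin_sq]
  · norm_num

lemma one_le_sq_dist_diskCenter {j k : Fin 8} (hjk : j < k) (hk : (k : ℕ) ≠ 7) :
    1 ≤ ((diskCenter j).1 - (diskCenter k).1) ^ 2
      + ((diskCenter j).2 - (diskCenter k).2) ^ 2 := by
  have hjk' : (j : ℕ) < k := hjk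
  have hj5 : (j : ℕ) ≤ 5 := by omega
  by_cases hk5 : (k : ℕ) ≤ 5
  · simp only [diskCenter, if_pos hj5, if_pos hk5]
    rw [sq_dist_cos_sin]
    have hjk_real : ((j : ℕ) : ℝ) + 1 ≤ (k : ℕ) := by exact_mod_cast hjk'
    have hk_real : ((k : ℕ) : ℝ) ≤ 5 := by exact_mod_cast hk5
    have hj_nonneg : (0 : ℝ) ≤ (j : ℕ) := Nat.cast_nonneg _
    have hcos := cos_le_half_of_mem_Icc (x := (k : ℕ) * π / 3 - (j : ℕ) * π / 3)
      (by nlinarith [pi_pos]) (by nlinarith [pi_pos])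
    rw [← cos_neg, neg_sub] at hcos
    linarith
  · simp only [diskCenter, if_pos hj5, if_neg hk5]
    rw [sub_zero, sub_zero, cos_sq_add_sin_sq]

/-- for `0 < r ≤ 1/2`, every weighted pairwise sum
`α_j B^j + α_k B^k` (`j < k`) of the family of Instance 2.1 is positive
semidefinite, i.e. the family satisfies Condition (D). -/
theorem diskFam_conditionD (r : ℝ) (hr : 0 < r) (hr' : r ≤ 1 / 2) :
    ∀ j k : Fin 8, j < k →
      (diskWeight j • diskFam r j + diskWeight k • diskFam r k).PosSemidef := by
  intro j k hjk
  have hr2 : 4 * r ^ 2 ≤ 1 := by nlinarith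
  have hj : (j : ℕ) ≠ 7 := by have : (j : ℕ) < k := hjk; omega
  rw [diskWeight_of_ne_seven hj, one_smul, diskFam_of_ne_seven r hj]
  by_cases hk : (k : ℕ) = 7
  · rw [diskWeight_seven hk, diskFam_seven r hk]
    refine diskMat_add_smul_neg_diskMat_posSemidef (by norm_num) ?_
    linarith [diskCenter_sq_le_one j]
  · rw [diskWeight_of_ne_seven hk, one_smul, diskFam_of_ne_seven r hk]
    refine diskMat_add_diskMat_posSemidef ?_
    linarith [one_le_sq_dist_diskCenter hjk hk]
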